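/- For every finite, unweighted, connected graph G on n vertices, the second smallest eigenvalue of the normalized Laplacian satisfies λ₂ ≥ 2/(n(n−1)²). -/

import Mathlib

/-!
Put `g = D^{-1/2} f`. Then `fᵀ L f` is the Dirichlet energy `∑_{uv ∈ E} (g u - g v)²`, and
`f ⊥ D^{1/2} 𝟙` says `∑ d_x g_x = 0`, so that `2 vol(G) ∑ d_x g_x² = ∑_{x,y} d_x d_y (g_x - g_y)²`.
Cauchy–Schwarz along a path of length at most `n - 1` bounds every `(g_x - g_y)²` by `n - 1` times
the energy, and `vol(G) ≤ n (n - 1)`; hence `∑ f² ≤ n (n - 1)² / 2 · fᵀ L f` on `(D^{1/2} 𝟙)^⊥`.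
Some nonzero combination of the first two eigenvectors lies in that hyperplane, and its Rayleigh
quotient is at most `λ₂`.
-/

/-- The normalized Laplacian `I - D^{-1/2} A D^{-1/2}` of a finite simple graph. -/
noncomputable def normLapG {n : ℕ} (G : SimpleGraph (Fin n)) [DecidableRel G.Adj] :
    Matrix (Fin n) (Fin n) ℝ :=
  Matrix.of fun x y =>
    (if x = y then (1 : ℝ) else 0) -
      (if G.Adj x y then (1 : ℝ) else 0) /
        (Real.sqrt (G.degree x) * Real.sqrt (G.degree y))

open Finset Matrix

theorem Finset.sum_sum_mul_mul_sub_sq {ι : Type*} [Fintype ι] (w g : ι → ℝ) :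
    ∑ x, ∑ y, w x * w y * (g x - g y) ^ 2 =
      2 * ((∑ x, w x) * ∑ x, w x * g x ^ 2 - (∑ x, w x * g x) ^ 2) := by
  calc _ = ∑ x, ∑ y, (w x * g x ^ 2 * w y + w x * (w y * g y ^ 2)
          - 2 * (w x * g x) * (w y * g y)) :=
        sum_congr rfl fun x _ => sum_congr rfl fun y _ => by ring
    _ = _ := by
        simp only [sum_add_distrib, sum_sub_distrib, ← mul_sum, ← sum_mul]
        ring

theorem Finset.two_mul_sum_mul_sq_le_of_sum_mul_eq_zero {ι : Type*} [Fintype ι] {w g : ι → ℝ}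
    {C : ℝ} (hw : ∀ x, 0 ≤ w x) (hg : ∑ x, w x * g x = 0) (hC : ∀ x y, (g x - g y) ^ 2 ≤ C) :
    2 * ∑ x, w x * g x ^ 2 ≤ (∑ x, w x) * C := by
  have key : (∑ x, w x) * (2 * ∑ x, w x * g x ^ 2) ≤ (∑ x, w x) * ((∑ x, w x) * C) :=
    calc _ = ∑ x, ∑ y, w x * w y * (g x - g y) ^ 2 := by
          rw [sum_sum_mul_mul_sub_sq, hg]
          ring
      _ ≤ ∑ x, ∑ y, w x * w y * C :=
          sum_le_sum fun x _ => sum_le_sum fun y _ =>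
            mul_le_mul_of_nonneg_left (hC x y) (mul_nonneg (hw x) (hw y))
      _ = _ := by
          simp only [← sum_mul, ← mul_sum]
          ring
  rcases (sum_nonneg fun x _ => hw x).eq_or_lt with hzero | hpos
  · have : ∀ x, w x = 0 := fun x =>
      (sum_eq_zero_iff_of_nonneg fun x _ => hw x).1 hzero.symm x (mem_univ x)
    simp [this]
  · exact le_of_mul_le_mul_left key hpos

namespace SimpleGraph

variable {V : Type*} {G : SimpleGraph V}

theorem Walk.sum_darts_sub (g : V → ℝ) {u v : V} (p : G.Walk u v) :
    (p.darts.map fun d => g d.fst - g d.snd).sum = g u - g v := by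
  induction p with
  | nil => simp
  | cons _ _ ih =>
    simp only [darts_cons, List.map_cons, List.sum_cons, ih]
    ring

variable [Fintype V] [DecidableRel G.Adj]

variable (G) in
/-- The sum of `(g u - g v)²` over the edges `uv`; every edge carries two darts. -/
noncomputable def dirichletEnergy (g : V → ℝ) : ℝ :=
  (∑ d : G.Dart, (g d.fst - g d.snd) ^ 2) / 2

theorem dirichletEnergy_nonneg (g : V → ℝ) : 0 ≤ G.dirichletEnergy g :=
  div_nonneg (sum_nonneg fun _ _ => sq_nonneg _) zero_le_two

theorem sum_darts_eq_sum_sum_adj (h : V → V → ℝ) :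
    ∑ d : G.Dart, h d.fst d.snd = ∑ i, ∑ j, if G.Adj i j then h i j else 0 := by
  classical
  let e : G.Dart ≃ {p : V × V // G.Adj p.1 p.2} :=
    { toFun := fun d => ⟨d.toProd, d.adj⟩, invFun := fun p => ⟨p.1, p.2⟩ }
  rw [← Fintype.sum_prod_type' (f := fun i j => if G.Adj i j then h i j else 0),
    ← sum_filter, ← sum_subtype_eq_sum_filter, subtype_univ]
  exact Fintype.sum_equiv e (fun d => h d.fst d.snd) (fun p => h p.1.1 p.1.2) fun _ => rfl

theorem dotProduct_lapMatrix_mulVec [DecidableEq V] (g : V → ℝ) :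
    g ⬝ᵥ (G.lapMatrix ℝ *ᵥ g) = G.dirichletEnergy g := by
  rw [← toLinearMap₂'_apply', lapMatrix_toLinearMap₂', dirichletEnergy,
    sum_darts_eq_sum_sum_adj fun a b => (g a - g b) ^ 2]

theorem Walk.IsTrail.two_mul_sum_darts_le [DecidableEq V] {u v : V} {p : G.Walk u v}
    (hp : p.IsTrail) {h : G.Dart → ℝ} (hsymm : ∀ d, h d.symm = h d) (hnonneg : ∀ d, 0 ≤ h d) :
    2 * ∑ d ∈ p.darts.toFinset, h d ≤ ∑ d, h d := by
  set t := p.darts.toFinset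
  have hdisj : Disjoint t (t.image Dart.symm) := by
    refine Finset.disjoint_left.2 fun d hd hd' => ?_
    obtain ⟨e, he, rfl⟩ := mem_image.1 hd'
    exact e.symm_ne (List.inj_on_of_nodup_map hp.edges_nodup (List.mem_toFinset.1 hd)
      (List.mem_toFinset.1 he) e.edge_symm)
  calc 2 * ∑ d ∈ t, h d = ∑ d ∈ t ∪ t.image Dart.symm, h d := by
        rw [sum_union hdisj, sum_image fun a _ b _ hab => Dart.symm_involutive.injective hab]
        simp only [hsymm]
        ring
    _ ≤ ∑ d, h d := sum_le_univ_sum_of_nonneg hnonneg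

theorem Walk.IsTrail.sq_sub_le_length_mul_dirichletEnergy (g : V → ℝ) {u v : V}
    {p : G.Walk u v} (hp : p.IsTrail) : (g u - g v) ^ 2 ≤ p.length * G.dirichletEnergy g := by
  classical
  have hnodup : p.darts.Nodup := hp.edges_nodup.of_map _
  set t := p.darts.toFinset
  have hsum : g u - g v = ∑ d ∈ t, (g d.fst - g d.snd) := by
    rw [List.sum_toFinset _ hnodup, sum_darts_sub]
  have hcard : #t = p.length := by rw [List.toFinset_card_of_nodup hnodup, length_darts]
  have hhalf : 2 * ∑ d ∈ t, (g d.fst - g d.snd) ^ 2 ≤ ∑ d : G.Dart, (g d.fst - g d.snd) ^ 2 :=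
    hp.two_mul_sum_darts_le
      (fun d => by simp only [Dart.symm_toProd, Prod.fst_swap, Prod.snd_swap]; ring)
      fun _ => sq_nonneg _
  calc (g u - g v) ^ 2 ≤ #t * ∑ d ∈ t, (g d.fst - g d.snd) ^ 2 := hsum ▸ sq_sum_le_card_mul_sum_sq
    _ ≤ p.length * G.dirichletEnergy g := by
        rw [hcard, dirichletEnergy]
        gcongr
        linarith

theorem Connected.sq_sub_le_dirichletEnergy (hG : G.Connected) (g : V → ℝ)
    (u v : V) : (g u - g v) ^ 2 ≤ (Fintype.card V - 1) * G.dirichletEnergy g := by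
  obtain ⟨p, hp⟩ := (hG.preconnected u v).exists_isPath
  have hlength : (p.length : ℝ) ≤ Fintype.card V - 1 := by
    rw [le_sub_iff_add_le]
    exact_mod_cast hp.length_lt
  calc _ ≤ p.length * G.dirichletEnergy g := hp.isTrail.sq_sub_le_length_mul_dirichletEnergy g
    _ ≤ _ := mul_le_mul_of_nonneg_right hlength (dirichletEnergy_nonneg g)

theorem Connected.two_mul_sum_degree_mul_sq_le (hG : G.Connected) {g : V → ℝ}
    (hg : ∑ x, (G.degree x : ℝ) * g x = 0) :
    2 * ∑ x, (G.degree x : ℝ) * g x ^ 2 ≤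
      Fintype.card V * (Fintype.card V - 1) ^ 2 * G.dirichletEnergy g := by
  have : Nonempty V := hG.nonempty
  have hcard : (1 : ℝ) ≤ Fintype.card V := by exact_mod_cast Fintype.card_pos
  have hvol : ∑ x, (G.degree x : ℝ) ≤ Fintype.card V * (Fintype.card V - 1) :=
    calc _ ≤ ∑ _x : V, ((Fintype.card V : ℝ) - 1) := sum_le_sum fun x _ => by
          rw [le_sub_iff_add_le]
          exact_mod_cast G.degree_lt_card_verts x
      _ = _ := by rw [sum_const, card_univ, nsmul_eq_mul]
  calc _ ≤ (∑ x, (G.degree x : ℝ)) * ((Fintype.card V - 1) * G.dirichletEnergy g) :=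
        two_mul_sum_mul_sq_le_of_sum_mul_eq_zero (fun _ => Nat.cast_nonneg _) hg
          (hG.sq_sub_le_dirichletEnergy g)
    _ ≤ Fintype.card V * (Fintype.card V - 1) * ((Fintype.card V - 1) * G.dirichletEnergy g) :=
        mul_le_mul_of_nonneg_right hvol
          (mul_nonneg (by linarith) (dirichletEnergy_nonneg g))
    _ = _ := by ring

end SimpleGraph

namespace Matrix.IsHermitian

variable {ι : Type*} [Fintype ι] [DecidableEq ι] {A : Matrix ι ι ℝ} (hA : A.IsHermitian)

theorem dotProduct_eigenvectorBasis (i j : ι) :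
    ⇑(hA.eigenvectorBasis i) ⬝ᵥ ⇑(hA.eigenvectorBasis j) = if i = j then 1 else 0 := by
  rw [← orthonormal_iff_ite.1 hA.eigenvectorBasis.orthonormal i j,
    EuclideanSpace.inner_eq_star_dotProduct, star_trivial, dotProduct_comm]

theorem le_max_eigenvalues {w : ι → ℝ} {c : ℝ}
    (hc : ∀ f, w ⬝ᵥ f = 0 → c * (f ⬝ᵥ f) ≤ f ⬝ᵥ (A *ᵥ f)) {i j : ι} (hij : i ≠ j) :
    c ≤ max (hA.eigenvalues i) (hA.eigenvalues j) := by
  set u := ⇑(hA.eigenvectorBasis i)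
  set v := ⇑(hA.eigenvectorBasis j)
  obtain ⟨a, b, hab, hw⟩ :
      ∃ a b : ℝ, 0 < a ^ 2 + b ^ 2 ∧ a * (w ⬝ᵥ u) + b * (w ⬝ᵥ v) = 0 := by
    by_cases hwu : w ⬝ᵥ u = 0
    · exact ⟨1, 0, by norm_num, by simp [hwu]⟩
    · exact ⟨w ⬝ᵥ v, -(w ⬝ᵥ u), by nlinarith [sq_pos_of_ne_zero hwu, sq_nonneg (w ⬝ᵥ v)],
        by ring⟩
  set f := a • u + b • v
  have horth := hA.dotProduct_eigenvectorBasis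
  have hnorm : f ⬝ᵥ f = a ^ 2 + b ^ 2 := by
    simp only [f, add_dotProduct, dotProduct_add, smul_dotProduct, dotProduct_smul, u, v, horth,
      hij, hij.symm, if_true, if_false, smul_eq_mul]
    ring
  have hquad : f ⬝ᵥ (A *ᵥ f) = a ^ 2 * hA.eigenvalues i + b ^ 2 * hA.eigenvalues j := by
    simp only [f, mulVec_add, mulVec_smul, u, v, hA.mulVec_eigenvectorBasis, add_dotProduct,
      dotProduct_add, smul_dotProduct, dotProduct_smul, horth, hij, hij.symm, if_true, if_false,
      smul_eq_mul]
    ring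
  have hf : w ⬝ᵥ f = 0 := by simp only [f, dotProduct_add, dotProduct_smul, smul_eq_mul, hw]
  set M := max (hA.eigenvalues i) (hA.eigenvalues j)
  refine le_of_mul_le_mul_right ?_ hab
  calc c * (a ^ 2 + b ^ 2) ≤ a ^ 2 * hA.eigenvalues i + b ^ 2 * hA.eigenvalues j :=
        hnorm ▸ hquad ▸ hc f hf
    _ ≤ a ^ 2 * M + b ^ 2 * M := by gcongr; exacts [le_max_left _ _, le_max_right _ _]
    _ = M * (a ^ 2 + b ^ 2) := by ring

end Matrix.IsHermitian

open SimpleGraph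

section normLapG

variable {n : ℕ} {G : SimpleGraph (Fin n)} [DecidableRel G.Adj]

theorem normLapG_eq_diagonal_mul_lapMatrix_mul_diagonal (hdeg : ∀ x, 0 < G.degree x) :
    normLapG G = diagonal (fun x => (√(G.degree x))⁻¹) * G.lapMatrix ℝ *
      diagonal (fun x => (√(G.degree x))⁻¹) := by
  ext x y
  rcases eq_or_ne x y with rfl | hxy
  · have : √(G.degree x : ℝ) ≠ 0 := by have := hdeg x; positivity
    simp only [normLapG, of_apply, if_true, SimpleGraph.irrefl, if_false, zero_div, sub_zero,
      lapMatrix, degMatrix, mul_diagonal, diagonal_mul, Matrix.sub_apply, diagonal_apply_eq,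
      adjMatrix_apply]
    field_simp
    exact Real.sq_sqrt (Nat.cast_nonneg _)
  · simp only [normLapG, of_apply, hxy, if_false, zero_sub, lapMatrix, degMatrix, mul_diagonal,
      diagonal_mul, Matrix.sub_apply, ne_eq, not_false_eq_true, diagonal_apply_ne,
      adjMatrix_apply, neg_mul, mul_neg, neg_inj]
    split_ifs <;> simp [mul_comm]

theorem dotProduct_normLapG_mulVec (hdeg : ∀ x, 0 < G.degree x) (f : Fin n → ℝ) :
    f ⬝ᵥ (normLapG G *ᵥ f) = G.dirichletEnergy fun x => f x / √(G.degree x) := by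
  set D := diagonal fun x => (√(G.degree x : ℝ))⁻¹
  have hD : D *ᵥ f = fun x => f x / √(G.degree x) :=
    funext fun x => by simp only [D, mulVec_diagonal, div_eq_inv_mul]
  rw [normLapG_eq_diagonal_mul_lapMatrix_mul_diagonal hdeg, ← mulVec_mulVec, ← mulVec_mulVec,
    dotProduct_mulVec, ← diagonal_transpose, vecMul_transpose, diagonal_transpose, hD,
    dotProduct_lapMatrix_mulVec]

theorem two_div_mul_dotProduct_le_dotProduct_normLapG_mulVec (hn : 2 ≤ n)
    (hG : G.Connected) {f : Fin n → ℝ} (hf : (fun x => √(G.degree x : ℝ)) ⬝ᵥ f = 0) :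
    2 / (n * ((n : ℝ) - 1) ^ 2) * (f ⬝ᵥ f) ≤ f ⬝ᵥ (normLapG G *ᵥ f) := by
  have : Nontrivial (Fin n) := Fin.nontrivial_iff_two_le.2 hn
  have hdeg : ∀ x, 0 < G.degree x := fun x => hG.preconnected.degree_pos_of_nontrivial x
  set g := fun x => f x / √(G.degree x)
  have hmul : ∀ x, (G.degree x : ℝ) * g x = √(G.degree x) * f x := fun x => by
    have : √(G.degree x : ℝ) ≠ 0 := by have := hdeg x; positivity
    rw [mul_div_assoc', div_eq_iff this, mul_right_comm, Real.mul_self_sqrt (Nat.cast_nonneg _)]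
  have hmul_sq : ∀ x, (G.degree x : ℝ) * g x ^ 2 = f x * f x := fun x => by
    have : (G.degree x : ℝ) ≠ 0 := by have := hdeg x; positivity
    rw [div_pow, Real.sq_sqrt (Nat.cast_nonneg _)]
    field_simp
  have key := hG.two_mul_sum_degree_mul_sq_le (g := g) (by simpa only [hmul, dotProduct] using hf)
  simp only [hmul_sq, Fintype.card_fin] at key
  have hpos : (0 : ℝ) < n * ((n : ℝ) - 1) ^ 2 := by
    have : (2 : ℝ) ≤ n := by exact_mod_cast hn
    have : (0 : ℝ) < n - 1 := by linarith
    positivity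
  rw [dotProduct_normLapG_mulVec hdeg, div_mul_eq_mul_div, div_le_iff₀ hpos]
  exact key.trans_eq (mul_comm _ _)

end normLapG

/-- For every finite, unweighted, connected graph on `n` vertices,
`λ₂ ≥ 2 / (n (n-1)²)`. -/
theorem stmt5 {n : ℕ} (hn : 2 ≤ n) (G : SimpleGraph (Fin n)) [DecidableRel G.Adj]
    (hconn : G.Connected)
    (hL : (normLapG G).IsHermitian)
    (lam : Fin n → ℝ) (hmono : Monotone lam)
    (hperm : ∃ σ : Equiv.Perm (Fin n), lam = hL.eigenvalues ∘ σ) :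
    2 / (n * ((n : ℝ) - 1) ^ 2) ≤ lam ⟨1, by omega⟩ := by
  obtain ⟨σ, rfl⟩ := hperm
  have h01 : (⟨0, by omega⟩ : Fin n) ≤ ⟨1, by omega⟩ := Fin.mk_le_mk.2 zero_le_one
  have hne : σ ⟨0, by omega⟩ ≠ σ ⟨1, by omega⟩ := σ.injective.ne (by simp [Fin.ext_iff])
  calc _ ≤ max (hL.eigenvalues (σ ⟨0, by omega⟩)) (hL.eigenvalues (σ ⟨1, by omega⟩)) :=
        hL.le_max_eigenvalues
          (fun _ hf => two_div_mul_dotProduct_le_dotProduct_normLapG_mulVec hn hconn hf) hne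
    _ = _ := max_eq_right (hmono h01)
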